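/- Assume that every direct sum of pure-injective R-modules is pure-injective. If A and B are pure-injective R-modules and there exist pure embeddings f : A → B and g : B → A, then A and B are isomorphic as R-modules. -/

import Mathlib

universe u

/-- `A` is a pure submodule of its ambient module: every finite system of
`R`-linear equations `∑ j, r i j • x j = a i` with constants `a i ∈ A` that has
a solution in the ambient module has a solution in `A`. -/
def IsPureSubmodule {R : Type*} [Ring R] {M : Type*} [AddCommGroup M] [Module R M]
    (A : Submodule R M) : Prop :=
  ∀ (m n : ℕ) (r : Fin m → Fin n → R) (a : Fin m → M),
    (∀ i, a i ∈ A) →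
    (∃ x : Fin n → M, ∀ i, (∑ j, r i j • x j) = a i) →
    ∃ x : Fin n → M, (∀ j, x j ∈ A) ∧ ∀ i, (∑ j, r i j • x j) = a i

/-- A pure embedding is an injective linear map whose image is a pure submodule
of its codomain. -/
def IsPureEmbedding {R : Type*} [Ring R] {M N : Type*} [AddCommGroup M] [Module R M]
    [AddCommGroup N] [Module R N] (f : M →ₗ[R] N) : Prop :=
  Function.Injective f ∧ IsPureSubmodule (LinearMap.range f)

/-- `E` is pure-injective: every homomorphism `g : A → E` extends along every
pure embedding `f : A → B`. -/
def PureInjective (R : Type u) [Ring R] (E : Type u) [AddCommGroup E] [Module R E] : Prop :=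
  ∀ (A B : Type u) [AddCommGroup A] [Module R A] [AddCommGroup B] [Module R B]
    (f : A →ₗ[R] B), IsPureEmbedding f →
    ∀ g : A →ₗ[R] E, ∃ h : B →ₗ[R] E, h.comp f = g

/-!
Splitting off the pure embeddings `g : B → A` and `f : A → B`, whose domains are pure-injective,
gives `A ≅ B × K` and `B ≅ A × L`, hence `A ≅ P × A` with `P = L × K`. Iterating this isomorphism
embeds `Q = P^(ℕ)` into `A`; the embedding is locally split, hence pure, and `Q` is pure-injective
by hypothesis, so `A ≅ Q × W`. Since `L × Q ≅ Q`, we get `B ≅ A × L ≅ (L × Q) × W ≅ Q × W ≅ A`.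
-/

open Filter

section PureInjective

variable {R : Type u} [Ring R] {E X : Type u} [AddCommGroup E] [Module R E]
  [AddCommGroup X] [Module R X]

theorem PureInjective.of_retract (hE : PureInjective R E) (i : X →ₗ[R] E) (p : E →ₗ[R] X)
    (hpi : p ∘ₗ i = LinearMap.id) : PureInjective R X := by
  intro A B _ _ _ _ f hf g
  obtain ⟨h, hh⟩ := hE A B f hf (i ∘ₗ g)
  refine ⟨p ∘ₗ h, ?_⟩
  rw [LinearMap.comp_assoc, hh, ← LinearMap.comp_assoc, hpi, LinearMap.id_comp]

theorem PureInjective.of_linearEquiv (hE : PureInjective R E) (e : E ≃ₗ[R] X) :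
    PureInjective R X :=
  hE.of_retract e.symm e (by ext; simp)

theorem PureInjective.nonempty_linearEquiv_prod_quotient (hX : PureInjective R X)
    {f : X →ₗ[R] E} (hf : IsPureEmbedding f) :
    Nonempty (E ≃ₗ[R] X × (E ⧸ LinearMap.range f)) := by
  obtain ⟨r, hr⟩ := hX X E f hf LinearMap.id
  exact ⟨((f.exact_map_mkQ_range).splitInjectiveEquiv (Submodule.mkQ_surjective _) ⟨r, hr⟩).1⟩

end PureInjective

theorem isPureEmbedding_of_eventually_leftInverse {R : Type*} [Ring R] {M N : Type*}
    [AddCommGroup M] [Module R M] [AddCommGroup N] [Module R N] {ι : Type*} {l : Filter ι}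
    [l.NeBot] (f : M →ₗ[R] N) (ρ : ι → N →ₗ[R] M) (h : ∀ x, ∀ᶠ i in l, ρ i (f x) = x) :
    IsPureEmbedding f := by
  refine ⟨fun x y hxy => ?_, ?_⟩
  · obtain ⟨i, hx, hy⟩ := ((h x).and (h y)).exists
    rw [← hx, ← hy, hxy]
  · rintro m n r a ha ⟨x, hx⟩
    choose w hw using ha
    obtain ⟨i, hi⟩ := (eventually_all.2 fun k => h (w k)).exists
    refine ⟨fun j => f (ρ i (x j)), fun j => LinearMap.mem_range_self _ _, fun k => ?_⟩
    calc ∑ j, r k j • f (ρ i (x j)) = f (ρ i (a k)) := by simp [← hx k, map_sum, map_smul]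
      _ = a k := by rw [← hw k, hi k]

section Swindle

variable {R : Type*} [Ring R] {P A : Type*} [AddCommGroup P] [Module R P]
  [AddCommGroup A] [Module R A] (σ : (P × A) ≃ₗ[R] A)

/-- `A = σ(P × 0) ⊕ t(A)` for `t = σ ∘ inr`, so the submodules `tⁿ(σ(P × 0))` form an internal
direct sum of copies of `P`. -/
noncomputable def swindleMap : (ℕ →₀ P) →ₗ[R] A :=
  Finsupp.lsum ℕ fun n =>
    ((σ.toLinearMap ∘ₗ LinearMap.inr R P A) ^ n) ∘ₗ σ.toLinearMap ∘ₗ LinearMap.inl R P A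

theorem swindleMap_single_zero (p : P) : swindleMap σ (Finsupp.single 0 p) = σ (p, 0) := by
  simp [swindleMap]

theorem swindleMap_single_succ (n : ℕ) (p : P) :
    swindleMap σ (Finsupp.single (n + 1) p) = σ (0, swindleMap σ (Finsupp.single n p)) := by
  simp only [swindleMap, Finsupp.lsum_single, pow_succ']
  rfl

noncomputable def swindleRetraction : ℕ → A →ₗ[R] (ℕ →₀ P)
  | 0 => 0
  | n + 1 => (Finsupp.lsingle 0).coprod (Finsupp.lmapDomain P R Nat.succ) ∘ₗ
      LinearMap.id.prodMap (swindleRetraction n) ∘ₗ σ.symm.toLinearMap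

theorem swindleRetraction_succ_apply (n : ℕ) (p : P) (a : A) :
    swindleRetraction σ (n + 1) (σ (p, a)) =
      Finsupp.single 0 p + Finsupp.mapDomain Nat.succ (swindleRetraction σ n a) := by
  simp [swindleRetraction]

theorem swindleRetraction_swindleMap_single {k n : ℕ} (h : k < n) (p : P) :
    swindleRetraction σ n (swindleMap σ (Finsupp.single k p)) = Finsupp.single k p := by
  induction k generalizing n with
  | zero =>
    obtain ⟨n, rfl⟩ := Nat.exists_eq_add_one_of_ne_zero (Nat.ne_zero_of_lt h)
    simp [swindleMap_single_zero, swindleRetraction_succ_apply]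
  | succ k ih =>
    obtain ⟨n, rfl⟩ := Nat.exists_eq_add_one_of_ne_zero (by omega : n ≠ 0)
    rw [swindleMap_single_succ, swindleRetraction_succ_apply, ih (by omega)]
    simp

theorem eventually_swindleRetraction_swindleMap (q : ℕ →₀ P) :
    ∀ᶠ n in atTop, swindleRetraction σ n (swindleMap σ q) = q := by
  induction q using Finsupp.induction_linear with
  | zero => simp
  | add q₁ q₂ h₁ h₂ =>
    filter_upwards [h₁, h₂] with n hn₁ hn₂
    simp [hn₁, hn₂]
  | single k p =>
    filter_upwards [eventually_gt_atTop k] with n hn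
    exact swindleRetraction_swindleMap_single σ hn p

theorem isPureEmbedding_swindleMap : IsPureEmbedding (swindleMap σ) :=
  isPureEmbedding_of_eventually_leftInverse _ _ (eventually_swindleRetraction_swindleMap σ)

end Swindle

section FinsuppEquiv

variable (R : Type*) [Ring R] (M N : Type*) [AddCommGroup M] [Module R M]
  [AddCommGroup N] [Module R N]

noncomputable def finsuppProdLEquivProdFinsupp (ι : Type*) :
    (ι →₀ M × N) ≃ₗ[R] (ι →₀ M) × (ι →₀ N) :=
  LinearEquiv.ofLinearMap
    ((Finsupp.mapRange.linearMap (LinearMap.fst R M N)).prod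
      (Finsupp.mapRange.linearMap (LinearMap.snd R M N)))
    ((Finsupp.mapRange.linearMap (LinearMap.inl R M N)).coprod
      (Finsupp.mapRange.linearMap (LinearMap.inr R M N)))
    (by ext <;> simp) (by ext <;> simp)

noncomputable def finsuppNatLEquivProd : (ℕ →₀ M) ≃ₗ[R] M × (ℕ →₀ M) :=
  Finsupp.domLCongr Equiv.natEquivNatSumPUnit.{0} ≪≫ₗ
    Finsupp.sumFinsuppLEquivProdFinsupp R ≪≫ₗ LinearEquiv.prodComm R _ _ ≪≫ₗ
    (Finsupp.uniqueLinearEquiv R M PUnit.unit).prodCongr (LinearEquiv.refl R _)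

noncomputable def prodFinsuppNatProdLEquiv : (M × (ℕ →₀ M × N)) ≃ₗ[R] (ℕ →₀ M × N) :=
  (LinearEquiv.refl R M).prodCongr (finsuppProdLEquivProdFinsupp R M N ℕ) ≪≫ₗ
    (LinearEquiv.prodAssoc R _ _ _).symm ≪≫ₗ
    (finsuppNatLEquivProd R M).symm.prodCongr (LinearEquiv.refl R _) ≪≫ₗ
    (finsuppProdLEquivProdFinsupp R M N ℕ).symm

end FinsuppEquiv

noncomputable def finsuppNatLEquivDirectSum (R : Type*) [Ring R] (M : Type u) [AddCommGroup M]
    [Module R M] : (ℕ →₀ M) ≃ₗ[R] DirectSum (ULift.{u} ℕ) fun _ => M :=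
  haveI := Classical.decPred fun m : M => m ≠ 0
  Finsupp.domLCongr Equiv.ulift.symm ≪≫ₗ finsuppLequivDFinsupp R

theorem stmt17 (R : Type u) [Ring R]
    -- every direct sum of pure-injective `R`-modules is pure-injective
    (hsum : ∀ (ι : Type u) (M : ι → Type u) [∀ i, AddCommGroup (M i)] [∀ i, Module R (M i)],
      (∀ i, PureInjective R (M i)) → PureInjective R (DirectSum ι M))
    (A B : Type u) [AddCommGroup A] [Module R A] [AddCommGroup B] [Module R B]
    (hA : PureInjective R A) (hB : PureInjective R B)
    (hex : (∃ f : A →ₗ[R] B, IsPureEmbedding f) ∧ ∃ g : B →ₗ[R] A, IsPureEmbedding g) :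
    Nonempty (A ≃ₗ[R] B) := by
  obtain ⟨⟨f, hf⟩, ⟨g, hg⟩⟩ := hex
  obtain ⟨eA⟩ := hB.nonempty_linearEquiv_prod_quotient hg
  obtain ⟨eB⟩ := hA.nonempty_linearEquiv_prod_quotient hf
  set K := A ⧸ LinearMap.range g
  set L := B ⧸ LinearMap.range f
  let σ : ((L × K) × A) ≃ₗ[R] A :=
    (eA ≪≫ₗ eB.prodCongr (LinearEquiv.refl R K) ≪≫ₗ LinearEquiv.prodAssoc R A L K ≪≫ₗ
      LinearEquiv.prodComm R A (L × K)).symm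
  have hP : PureInjective R (L × K) :=
    hA.of_retract (σ.toLinearMap ∘ₗ LinearMap.inl R _ A)
      (LinearMap.fst R _ A ∘ₗ σ.symm.toLinearMap) (by ext <;> simp)
  have hQ : PureInjective R (ℕ →₀ L × K) :=
    (hsum _ _ fun _ => hP).of_linearEquiv (finsuppNatLEquivDirectSum R (L × K)).symm
  obtain ⟨eW⟩ := hQ.nonempty_linearEquiv_prod_quotient (isPureEmbedding_swindleMap σ)
  exact ⟨eW ≪≫ₗ (prodFinsuppNatProdLEquiv R L K).symm.prodCongr (LinearEquiv.refl R _) ≪≫ₗ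
    LinearEquiv.prodAssoc R _ _ _ ≪≫ₗ (LinearEquiv.refl R L).prodCongr eW.symm ≪≫ₗ
    LinearEquiv.prodComm R L A ≪≫ₗ eB.symm⟩
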